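/- arXiv:2004.13091 — 3 statements merged into one kernel-verified Lean document; each statement's English description precedes it below -/
import Mathlib

section
/- Let Ω ⊂ ℝⁿ and I ⊂ ℝᵐ be bounded domains, X = L²(Ω), Y a Hilbert space compactly embedded into L²(Ω × I), Z = L²(I), and define B : X × Y → Z by B(c,s)(t) = ∫_Ω c(x) s(x,t) dx. If (cᵏ, sᵏ) ⇀ (c*, s*) weakly in X × Y, then B(cᵏ, sᵏ) ⇀ B(c*, s*) weakly in Z. -/
/-!
Represent `g ∈ L²(I)'` by `h ∈ L²(I)`. By Fubini, `g (B(c, s)) = ⟪c ⊗ h, e s⟫` in `L²(Ω × I)`,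
a continuous bilinear form evaluated at `(c, e s)`. Such a form passes to the limit along a weakly
convergent first argument and a norm convergent second one, because weakly convergent sequences
are bounded; the compact embedding turns `sᵏ ⇀ s*` into `e sᵏ → e s*` in norm.
-/

open Filter MeasureTheory Topology
open scoped ENNReal InnerProductSpace

section WeakConvergence

variable {𝕜 E F : Type*} [RCLike 𝕜] [NormedAddCommGroup E] [NormedSpace 𝕜 E]
  [NormedAddCommGroup F] [NormedSpace 𝕜 F]

/- Banach–Steinhaus applies to the `x k` viewed as functionals on the (complete) dual, and
Hahn–Banach makes `E → E''` an isometry. -/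
theorem exists_norm_le_of_forall_tendsto_dual {x : ℕ → E} {x₀ : E}
    (hx : ∀ f : StrongDual 𝕜 E, Tendsto (fun k => f (x k)) atTop (𝓝 (f x₀))) :
    ∃ C, ∀ k, ‖x k‖ ≤ C := by
  have hpointwise : ∀ f : StrongDual 𝕜 E, ∃ C, ∀ k,
      ‖NormedSpace.inclusionInDoubleDualLi 𝕜 (x k) f‖ ≤ C := fun f => by
    obtain ⟨C, hC⟩ := (hx f).norm.bddAbove_range
    exact ⟨C, fun k => hC ⟨k, rfl⟩⟩
  obtain ⟨C, hC⟩ := banach_steinhaus hpointwise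
  exact ⟨C, fun k => (NormedSpace.inclusionInDoubleDualLi 𝕜).norm_map (x k) ▸ hC k⟩

theorem tendsto_apply_apply_of_forall_tendsto_dual_of_tendsto (β : E →L[𝕜] F →L[𝕜] 𝕜)
    {x : ℕ → E} {x₀ : E}
    (hx : ∀ f : StrongDual 𝕜 E, Tendsto (fun k => f (x k)) atTop (𝓝 (f x₀)))
    {y : ℕ → F} {y₀ : F} (hy : Tendsto y atTop (𝓝 y₀)) :
    Tendsto (fun k => β (x k) (y k)) atTop (𝓝 (β x₀ y₀)) := by
  obtain ⟨C, hC⟩ := exists_norm_le_of_forall_tendsto_dual hx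
  have hsplit : ∀ k, β (x k) (y k) = β (x k) (y k - y₀) + β.flip y₀ (x k) := fun k => by
    simp [map_sub]
  have hbound : ∀ k, ‖β (x k) (y k - y₀)‖ ≤ ‖β‖ * C * ‖y k - y₀‖ := fun k =>
    (β.le_opNorm₂ _ _).trans (by gcongr; exact hC k)
  have hsmall : Tendsto (fun k => β (x k) (y k - y₀)) atTop (𝓝 0) := by
    refine squeeze_zero_norm hbound ?_
    simpa using (tendsto_iff_norm_sub_tendsto_zero.1 hy).const_mul (‖β‖ * C)
  simpa only [hsplit, zero_add, ContinuousLinearMap.flip_apply] using hsmall.add (hx (β.flip y₀))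

end WeakConvergence

namespace MeasureTheory

variable {α β : Type*} [MeasurableSpace α] [MeasurableSpace β] {μ : Measure α} {ν : Measure β}
  {p : ℝ≥0∞}

theorem eLpNorm_mul_prod [SFinite ν] (hp : p ≠ ∞) {f : α → ℝ} {g : β → ℝ}
    (hf : AEMeasurable f μ) (hg : AEMeasurable g ν) :
    eLpNorm (fun z : α × β => f z.1 * g z.2) p (μ.prod ν) = eLpNorm f p μ * eLpNorm g p ν := by
  rcases eq_or_ne p 0 with rfl | hp0
  · simp
  simp only [eLpNorm_eq_lintegral_rpow_enorm_toReal hp0 hp, enorm_mul,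
    ENNReal.mul_rpow_of_nonneg _ _ ENNReal.toReal_nonneg]
  rw [lintegral_prod_mul (hf.enorm.pow_const _) (hg.enorm.pow_const _),
    ENNReal.mul_rpow_of_nonneg _ _ (by positivity)]

theorem MemLp.mul_prod [SFinite ν] (hp : p ≠ ∞) {f : α → ℝ} {g : β → ℝ} (hf : MemLp f p μ)
    (hg : MemLp g p ν) : MemLp (fun z : α × β => f z.1 * g z.2) p (μ.prod ν) := by
  refine ⟨hf.1.comp_fst.mul hg.1.comp_snd, ?_⟩
  rw [eLpNorm_mul_prod hp hf.1.aemeasurable hg.1.aemeasurable]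
  exact ENNReal.mul_lt_top hf.2 hg.2

namespace Lp

variable [SFinite ν] [Fact (1 ≤ p)]

noncomputable def mulProd (hp : p ≠ ∞) (h : Lp ℝ p ν) : Lp ℝ p μ →L[ℝ] Lp ℝ p (μ.prod ν) :=
  LinearMap.mkContinuous
    { toFun := fun c => ((Lp.memLp c).mul_prod hp (Lp.memLp h)).toLp _
      map_add' := fun a b => by
        rw [← MemLp.toLp_add]
        refine MemLp.toLp_congr _ _ ?_
        filter_upwards [Measure.quasiMeasurePreserving_fst.ae (Lp.coeFn_add a b)] with z hz
        simp only [Pi.add_apply, hz, add_mul]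
      map_smul' := fun r a => by
        rw [RingHom.id_apply, ← MemLp.toLp_const_smul]
        refine MemLp.toLp_congr _ _ ?_
        filter_upwards [Measure.quasiMeasurePreserving_fst.ae (Lp.coeFn_smul r a)] with z hz
        simp only [Pi.smul_apply, hz, smul_eq_mul, mul_assoc] }
    ‖h‖ fun c => by
      rw [LinearMap.coe_mk, AddHom.coe_mk, Lp.norm_toLp, eLpNorm_mul_prod hp
        (Lp.aestronglyMeasurable c).aemeasurable (Lp.aestronglyMeasurable h).aemeasurable,
        ENNReal.toReal_mul, mul_comm, Lp.norm_def, Lp.norm_def]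

theorem coeFn_mulProd (hp : p ≠ ∞) (h : Lp ℝ p ν) (c : Lp ℝ p μ) :
    mulProd hp h c =ᵐ[μ.prod ν] fun z => c z.1 * h z.2 :=
  ((Lp.memLp c).mul_prod hp (Lp.memLp h)).coeFn_toLp

end Lp

variable [SFinite μ] [SFinite ν]

theorem L2.inner_mulProd (h : Lp ℝ 2 ν) (c : Lp ℝ 2 μ) (u : Lp ℝ 2 (μ.prod ν)) :
    ⟪Lp.mulProd ENNReal.ofNat_ne_top h c, u⟫_ℝ = ∫ t, h t * ∫ x, c x * u (x, t) ∂μ ∂ν := by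
  have hint : Integrable (fun z : α × β => c z.1 * h z.2 * u z) (μ.prod ν) := by
    refine (L2.integrable_inner (𝕜 := ℝ) (Lp.mulProd ENNReal.ofNat_ne_top h c) u).congr ?_
    filter_upwards [Lp.coeFn_mulProd ENNReal.ofNat_ne_top h c] with z hz
    simp [hz, mul_comm]
  calc ⟪Lp.mulProd ENNReal.ofNat_ne_top h c, u⟫_ℝ = ∫ z, c z.1 * h z.2 * u z ∂(μ.prod ν) := by
        rw [L2.inner_def]
        refine integral_congr_ae ?_
        filter_upwards [Lp.coeFn_mulProd ENNReal.ofNat_ne_top h c] with z hz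
        simp [hz, mul_comm]
    _ = ∫ t, ∫ x, c x * h t * u (x, t) ∂μ ∂ν := by
        rw [← integral_integral_swap hint, integral_integral hint]
    _ = ∫ t, h t * ∫ x, c x * u (x, t) ∂μ ∂ν := by
        congr 1 with t
        rw [← integral_const_mul]
        congr 1 with x
        ring

end MeasureTheory

theorem stmt_3_general {n m : ℕ}
    (Ω : Set (EuclideanSpace ℝ (Fin n))) (I : Set (EuclideanSpace ℝ (Fin m)))
    {Y : Type*} [NormedAddCommGroup Y] [InnerProductSpace ℝ Y]
    (e : Y →L[ℝ] Lp ℝ 2 ((volume.restrict Ω).prod (volume.restrict I)))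
    -- compact embedding: weak convergence in Y gives norm convergence in L²(Ω × I)
    (hcompact : ∀ (s : ℕ → Y) (slim : Y),
      (∀ f : Y →L[ℝ] ℝ, Tendsto (fun k => f (s k)) atTop (nhds (f slim))) →
      Tendsto (fun k => ‖e (s k) - e slim‖) atTop (nhds 0))
    (B : Lp ℝ 2 (volume.restrict Ω) → Y → Lp ℝ 2 (volume.restrict I))
    (hB : ∀ c s, ⇑(B c s) =ᵐ[volume.restrict I]
      fun t => ∫ x, (⇑c) x * (⇑(e s)) (x, t) ∂(volume.restrict Ω))
    (c : ℕ → Lp ℝ 2 (volume.restrict Ω)) (cstar : Lp ℝ 2 (volume.restrict Ω))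
    (s : ℕ → Y) (sstar : Y)
    (hc : ∀ f : Lp ℝ 2 (volume.restrict Ω) →L[ℝ] ℝ,
      Tendsto (fun k => f (c k)) atTop (nhds (f cstar)))
    (hs : ∀ f : Y →L[ℝ] ℝ, Tendsto (fun k => f (s k)) atTop (nhds (f sstar))) :
    ∀ g : Lp ℝ 2 (volume.restrict I) →L[ℝ] ℝ,
      Tendsto (fun k => g (B (c k) (s k))) atTop (nhds (g (B cstar sstar))) := by
  intro g
  obtain ⟨h, rfl⟩ := (InnerProductSpace.toDual ℝ (Lp ℝ 2 (volume.restrict I))).surjective g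
  have hgB : ∀ c s, InnerProductSpace.toDual ℝ _ h (B c s)
      = (innerSL ℝ).comp (Lp.mulProd ENNReal.ofNat_ne_top h) c (e s) := fun c s => by
    rw [InnerProductSpace.toDual_apply_apply, ContinuousLinearMap.comp_apply, innerSL_apply_apply,
      L2.inner_mulProd, L2.inner_def]
    refine integral_congr_ae ?_
    filter_upwards [hB c s] with t ht
    rw [ht, RCLike.inner_apply, conj_trivial, mul_comm]
  simp only [hgB]
  exact tendsto_apply_apply_of_forall_tendsto_dual_of_tendsto _ hc
    (tendsto_iff_norm_sub_tendsto_zero.2 (hcompact s sstar hs))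

/-- The integral operator `B(c,s)(t) = ∫_Ω c(x) s(x,t) dx`, with `s` ranging over a Hilbert
space `Y` compactly embedded (via `e`) into `L²(Ω × I)`, is sequentially weak-weak
continuous: weak convergence `(cᵏ,sᵏ) ⇀ (c*,s*)` implies `B(cᵏ,sᵏ) ⇀ B(c*,s*)` in `L²(I)`. -/
theorem stmt_3 {n m : ℕ}
    (Ω : Set (EuclideanSpace ℝ (Fin n))) (I : Set (EuclideanSpace ℝ (Fin m)))
    (hΩb : Bornology.IsBounded Ω) (hIb : Bornology.IsBounded I)
    (hΩm : MeasurableSet Ω) (hIm : MeasurableSet I)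
    {Y : Type*} [NormedAddCommGroup Y] [InnerProductSpace ℝ Y] [CompleteSpace Y]
    (e : Y →L[ℝ] Lp ℝ 2 ((volume.restrict Ω).prod (volume.restrict I)))
    -- compact embedding: weak convergence in Y gives norm convergence in L²(Ω × I)
    (hcompact : ∀ (s : ℕ → Y) (slim : Y),
      (∀ f : Y →L[ℝ] ℝ, Tendsto (fun k => f (s k)) atTop (nhds (f slim))) →
      Tendsto (fun k => ‖e (s k) - e slim‖) atTop (nhds 0))
    (B : Lp ℝ 2 (volume.restrict Ω) → Y → Lp ℝ 2 (volume.restrict I))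
    (hB : ∀ c s, ⇑(B c s) =ᵐ[volume.restrict I]
      fun t => ∫ x, (⇑c) x * (⇑(e s)) (x, t) ∂(volume.restrict Ω))
    (c : ℕ → Lp ℝ 2 (volume.restrict Ω)) (cstar : Lp ℝ 2 (volume.restrict Ω))
    (s : ℕ → Y) (sstar : Y)
    (hc : ∀ f : Lp ℝ 2 (volume.restrict Ω) →L[ℝ] ℝ,
      Tendsto (fun k => f (c k)) atTop (nhds (f cstar)))
    (hs : ∀ f : Y →L[ℝ] ℝ, Tendsto (fun k => f (s k)) atTop (nhds (f sstar))) :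
    ∀ g : Lp ℝ 2 (volume.restrict I) →L[ℝ] ℝ,
      Tendsto (fun k => g (B (c k) (s k))) atTop (nhds (g (B cstar sstar))) :=
  stmt_3_general Ω I e hcompact B hB c cstar s sstar hc hs
end

section
/- Let X = L²(Ω), Z = L²(I) for bounded domains Ω, I, let {Ψₖ}ₖ₌₁^K be orthonormal functions in L²(Ω × I), let Y = ℝ^K, and define B : X × Y → Z by B(c,κ)(t) = ∫_Ω c(x) Σₖ κₖ Ψₖ(x,t) dx. Then B is sequentially weak-weak continuous: (cʲ, κʲ) ⇀ (c*, κ*) implies B(cʲ, κʲ) ⇀ B(c*, κ*). -/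
/-! Writing `κ = ∑ₖ κₖ eₖ`, one has `B(c, κ) = ∑ₖ κₖ Aₖ c`, where `Aₖ` is the integral operator
with kernel `Ψₖ`. By Cauchy–Schwarz in `x` and Fubini, `‖Aₖ c‖ ≤ ‖Ψₖ‖ ‖c‖`, so for every
`g ∈ L²(I)*` the functional `g ∘ Aₖ` is continuous on `L²(Ω)`. Hence
`g (B(cʲ, κʲ)) = ∑ₖ κʲₖ (g ∘ Aₖ)(cʲ)` is a finite sum of products of convergent real sequences. -/

open Filter MeasureTheory
open scoped ENNReal RealInnerProductSpace

namespace MeasureTheory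

section Real

variable {α : Type*} [MeasurableSpace α] {μ : Measure α}

theorem Lp.coeFn_finset_sum {E : Type*} [NormedAddCommGroup E] {p : ℝ≥0∞} {ι : Type*}
    (s : Finset ι) (f : ι → Lp E p μ) :
    ⇑(∑ i ∈ s, f i) =ᵐ[μ] fun x => ∑ i ∈ s, f i x := by
  classical
  induction s using Finset.induction_on with
  | empty => simp only [Finset.sum_empty]; exact Lp.coeFn_zero E p μ
  | insert a s ha ih =>
    filter_upwards [Lp.coeFn_add (f a) (∑ i ∈ s, f i), ih] with x hadd hsum
    simp only [Finset.sum_insert ha, hadd, Pi.add_apply, hsum]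

theorem L2.real_inner_eq_integral_mul (f g : Lp ℝ 2 μ) : ⟪f, g⟫ = ∫ x, f x * g x ∂μ := by
  simp [L2.inner_def, mul_comm]

theorem L2.real_norm_sq_eq_integral_sq (f : Lp ℝ 2 μ) : ‖f‖ ^ 2 = ∫ x, f x ^ 2 ∂μ := by
  rw [← real_inner_self_eq_norm_sq, L2.real_inner_eq_integral_mul]
  simp only [sq]

theorem MemLp.norm_toLp_sq {f : α → ℝ} (hf : MemLp f 2 μ) :
    ‖hf.toLp f‖ ^ 2 = ∫ x, f x ^ 2 ∂μ := by
  rw [L2.real_norm_sq_eq_integral_sq]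
  exact integral_congr_ae (hf.coeFn_toLp.mono fun x hx => by simp only [hx])

theorem L2.sq_integral_mul_le (c : Lp ℝ 2 μ) {φ : α → ℝ} (hφ : MemLp φ 2 μ) :
    (∫ x, c x * φ x ∂μ) ^ 2 ≤ ‖c‖ ^ 2 * ∫ x, φ x ^ 2 ∂μ := by
  have hinner : ∫ x, c x * φ x ∂μ = ⟪c, hφ.toLp φ⟫ := by
    rw [L2.real_inner_eq_integral_mul]
    exact integral_congr_ae (hφ.coeFn_toLp.mono fun x hx => by simp only [hx])
  rw [hinner, ← hφ.norm_toLp_sq, ← mul_pow, ← sq_abs]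
  exact pow_le_pow_left₀ (abs_nonneg _) (abs_real_inner_le_norm _ _) 2

end Real

section Kernel

variable {α β : Type*} [MeasurableSpace α] [MeasurableSpace β]
  {μ : Measure α} {ν : Measure β} [SFinite μ] [SFinite ν]

theorem Lp.ae_memLp_slice (Ψ : Lp ℝ 2 (μ.prod ν)) : ∀ᵐ t ∂ν, MemLp (fun x => Ψ (x, t)) 2 μ := by
  filter_upwards [(Lp.memLp Ψ).integrable_sq.prod_left_ae,
    (Lp.aestronglyMeasurable Ψ).prodMk_right] with t hsq hmeas
  exact (memLp_two_iff_integrable_sq hmeas).2 hsq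

theorem Lp.integrable_integral_sq_slice (Ψ : Lp ℝ 2 (μ.prod ν)) :
    Integrable (fun t => ∫ x, Ψ (x, t) ^ 2 ∂μ) ν :=
  (Lp.memLp Ψ).integrable_sq.integral_prod_right

theorem L2.integral_integral_sq_slice (Ψ : Lp ℝ 2 (μ.prod ν)) :
    ∫ t, ∫ x, Ψ (x, t) ^ 2 ∂μ ∂ν = ‖Ψ‖ ^ 2 := by
  rw [L2.real_norm_sq_eq_integral_sq, integral_prod_symm _ (Lp.memLp Ψ).integrable_sq]

theorem Lp.ae_integrable_mul_slice (c : Lp ℝ 2 μ) (Ψ : Lp ℝ 2 (μ.prod ν)) :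
    ∀ᵐ t ∂ν, Integrable (fun x => c x * Ψ (x, t)) μ :=
  (Lp.ae_memLp_slice Ψ).mono fun _ ht => memLp_one_iff_integrable.1 (ht.smul (Lp.memLp c))

theorem Lp.aestronglyMeasurable_integral_mul_kernel (c : Lp ℝ 2 μ) (Ψ : Lp ℝ 2 (μ.prod ν)) :
    AEStronglyMeasurable (fun t => ∫ x, c x * Ψ (x, t) ∂μ) ν :=
  ((Lp.aestronglyMeasurable c).comp_snd.mul
    (Lp.aestronglyMeasurable Ψ).prod_swap).integral_prod_right'

theorem Lp.ae_sq_integral_mul_kernel_le (c : Lp ℝ 2 μ) (Ψ : Lp ℝ 2 (μ.prod ν)) :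
    ∀ᵐ t ∂ν, (∫ x, c x * Ψ (x, t) ∂μ) ^ 2 ≤ ‖c‖ ^ 2 * ∫ x, Ψ (x, t) ^ 2 ∂μ :=
  (Lp.ae_memLp_slice Ψ).mono fun _ ht => L2.sq_integral_mul_le c ht

theorem Lp.memLp_integral_mul_kernel (c : Lp ℝ 2 μ) (Ψ : Lp ℝ 2 (μ.prod ν)) :
    MemLp (fun t => ∫ x, c x * Ψ (x, t) ∂μ) 2 ν := by
  have hmeas := Lp.aestronglyMeasurable_integral_mul_kernel c Ψ
  refine (memLp_two_iff_integrable_sq hmeas).2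
    (((Lp.integrable_integral_sq_slice Ψ).const_mul (‖c‖ ^ 2)).mono' (hmeas.pow 2) ?_)
  filter_upwards [Lp.ae_sq_integral_mul_kernel_le c Ψ] with t ht
  rwa [Real.norm_of_nonneg (sq_nonneg _)]

theorem Lp.norm_toLp_integral_mul_kernel_le (c : Lp ℝ 2 μ) (Ψ : Lp ℝ 2 (μ.prod ν)) :
    ‖(Lp.memLp_integral_mul_kernel c Ψ).toLp _‖ ≤ ‖Ψ‖ * ‖c‖ := by
  refine (pow_le_pow_iff_left₀ (norm_nonneg _) (by positivity) two_ne_zero).1 ?_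
  calc ‖(Lp.memLp_integral_mul_kernel c Ψ).toLp _‖ ^ 2
      = ∫ t, (∫ x, c x * Ψ (x, t) ∂μ) ^ 2 ∂ν := MemLp.norm_toLp_sq _
    _ ≤ ∫ t, ‖c‖ ^ 2 * ∫ x, Ψ (x, t) ^ 2 ∂μ ∂ν :=
      integral_mono_ae (Lp.memLp_integral_mul_kernel c Ψ).integrable_sq
        ((Lp.integrable_integral_sq_slice Ψ).const_mul _) (Lp.ae_sq_integral_mul_kernel_le c Ψ)
    _ = (‖Ψ‖ * ‖c‖) ^ 2 := by rw [integral_const_mul, L2.integral_integral_sq_slice]; ring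

noncomputable def L2.kernelOperator (Ψ : Lp ℝ 2 (μ.prod ν)) : Lp ℝ 2 μ →L[ℝ] Lp ℝ 2 ν :=
  LinearMap.mkContinuous
    { toFun := fun c => (Lp.memLp_integral_mul_kernel c Ψ).toLp _
      map_add' := fun c₁ c₂ => by
        rw [← MemLp.toLp_add]
        refine MemLp.toLp_congr _ _ ?_
        filter_upwards [Lp.ae_integrable_mul_slice c₁ Ψ, Lp.ae_integrable_mul_slice c₂ Ψ]
          with t h₁ h₂
        rw [Pi.add_apply, ← integral_add h₁ h₂]
        refine integral_congr_ae ?_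
        filter_upwards [Lp.coeFn_add c₁ c₂] with x hx
        simp only [hx, Pi.add_apply, add_mul]
      map_smul' := fun a c => by
        rw [RingHom.id_apply, ← MemLp.toLp_const_smul]
        refine MemLp.toLp_congr _ _ (Eventually.of_forall fun t => ?_)
        rw [Pi.smul_apply, smul_eq_mul, ← integral_const_mul]
        refine integral_congr_ae ?_
        filter_upwards [Lp.coeFn_smul a c] with x hx
        simp only [hx, Pi.smul_apply, smul_eq_mul, mul_assoc] }
    ‖Ψ‖ fun c => Lp.norm_toLp_integral_mul_kernel_le c Ψ

theorem L2.kernelOperator_apply_ae (Ψ : Lp ℝ 2 (μ.prod ν)) (c : Lp ℝ 2 μ) :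
    kernelOperator Ψ c =ᵐ[ν] fun t => ∫ x, c x * Ψ (x, t) ∂μ :=
  (Lp.memLp_integral_mul_kernel c Ψ).coeFn_toLp

theorem L2.eq_sum_smul_kernelOperator {ι : Type*} [Fintype ι] {Ψ : ι → Lp ℝ 2 (μ.prod ν)}
    {c : Lp ℝ 2 μ} {w : ι → ℝ} {D : Lp ℝ 2 ν}
    (hD : D =ᵐ[ν] fun t => ∫ x, c x * ∑ k, w k * Ψ k (x, t) ∂μ) :
    D = ∑ k, w k • kernelOperator (Ψ k) c := by
  refine Lp.ext ?_
  filter_upwards [hD, Lp.coeFn_finset_sum Finset.univ fun k => w k • kernelOperator (Ψ k) c,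
    ae_all_iff.2 fun k => Lp.coeFn_smul (w k) (kernelOperator (Ψ k) c),
    ae_all_iff.2 fun k => kernelOperator_apply_ae (Ψ k) c,
    ae_all_iff.2 fun k => Lp.ae_integrable_mul_slice c (Ψ k)] with t hDt hsum hsmul hker hint
  simp only [hDt, hsum, hsmul, hker, Pi.smul_apply, smul_eq_mul, Finset.mul_sum,
    mul_left_comm (c _)]
  rw [integral_finsetSum _ fun k _ => (hint k).const_mul (w k)]
  simp only [integral_const_mul]

end Kernel

end MeasureTheory

theorem stmt_4_general {n m K : ℕ}
    (Ω : Set (EuclideanSpace ℝ (Fin n))) (I : Set (EuclideanSpace ℝ (Fin m)))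
    (Ψ : Fin K → Lp ℝ 2 ((volume.restrict Ω).prod (volume.restrict I)))
    (B : Lp ℝ 2 (volume.restrict Ω) → EuclideanSpace ℝ (Fin K) → Lp ℝ 2 (volume.restrict I))
    (hB : ∀ c κ, ⇑(B c κ) =ᵐ[volume.restrict I]
      fun t => ∫ x, (⇑c) x * (∑ k, κ k * (⇑(Ψ k)) (x, t)) ∂(volume.restrict Ω))
    (c : ℕ → Lp ℝ 2 (volume.restrict Ω)) (cstar : Lp ℝ 2 (volume.restrict Ω))
    (κ : ℕ → EuclideanSpace ℝ (Fin K)) (κstar : EuclideanSpace ℝ (Fin K))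
    (hc : ∀ f : Lp ℝ 2 (volume.restrict Ω) →L[ℝ] ℝ,
      Tendsto (fun j => f (c j)) atTop (nhds (f cstar)))
    (hκ : ∀ f : EuclideanSpace ℝ (Fin K) →L[ℝ] ℝ,
      Tendsto (fun j => f (κ j)) atTop (nhds (f κstar))) :
    ∀ g : Lp ℝ 2 (volume.restrict I) →L[ℝ] ℝ,
      Tendsto (fun j => g (B (c j) (κ j))) atTop (nhds (g (B cstar κstar))) := by
  intro g
  have hBsum : ∀ c κ, g (B c κ) = ∑ k, κ k * g (L2.kernelOperator (Ψ k) c) := fun c κ => by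
    rw [L2.eq_sum_smul_kernelOperator (hB c κ), map_sum]
    simp only [map_smul, smul_eq_mul]
  simp only [hBsum]
  exact tendsto_finsetSum _ fun k _ =>
    (hκ (EuclideanSpace.proj k)).mul (hc (g.comp (L2.kernelOperator (Ψ k))))

/-- With a finite-dimensional parameter space `Y = ℝ^K` and orthonormal kernels
`Ψₖ ∈ L²(Ω × I)`, the operator `B(c,κ)(t) = ∫_Ω c(x) Σₖ κₖ Ψₖ(x,t) dx` is sequentially
weak-weak continuous. -/
theorem stmt_4 {n m K : ℕ}
    (Ω : Set (EuclideanSpace ℝ (Fin n))) (I : Set (EuclideanSpace ℝ (Fin m)))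
    (hΩb : Bornology.IsBounded Ω) (hIb : Bornology.IsBounded I)
    (hΩm : MeasurableSet Ω) (hIm : MeasurableSet I)
    (Ψ : Fin K → Lp ℝ 2 ((volume.restrict Ω).prod (volume.restrict I)))
    (hΨ : Orthonormal ℝ Ψ)
    (B : Lp ℝ 2 (volume.restrict Ω) → EuclideanSpace ℝ (Fin K) → Lp ℝ 2 (volume.restrict I))
    (hB : ∀ c κ, ⇑(B c κ) =ᵐ[volume.restrict I]
      fun t => ∫ x, (⇑c) x * (∑ k, κ k * (⇑(Ψ k)) (x, t)) ∂(volume.restrict Ω))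
    (c : ℕ → Lp ℝ 2 (volume.restrict Ω)) (cstar : Lp ℝ 2 (volume.restrict Ω))
    (κ : ℕ → EuclideanSpace ℝ (Fin K)) (κstar : EuclideanSpace ℝ (Fin K))
    (hc : ∀ f : Lp ℝ 2 (volume.restrict Ω) →L[ℝ] ℝ,
      Tendsto (fun j => f (c j)) atTop (nhds (f cstar)))
    (hκ : ∀ f : EuclideanSpace ℝ (Fin K) →L[ℝ] ℝ,
      Tendsto (fun j => f (κ j)) atTop (nhds (f κstar))) :
    ∀ g : Lp ℝ 2 (volume.restrict I) →L[ℝ] ℝ,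
      Tendsto (fun j => g (B (c j) (κ j))) atTop (nhds (g (B cstar κstar))) :=
  stmt_4_general Ω I Ψ B hB c cstar κ κstar hc hκ
end

section
/- Let X, Y, Z be Hilbert spaces and B : X × Y → Z bilinear with ‖B(c,s)‖ ≤ C‖c‖‖s‖. Suppose there exists ω ∈ Z such that (ξ_{c*}, ξ_{s*}) = B′(c*,s*)*ω (source condition), and suppose D_{R̃}^{ξ*}((c,s),(c*,s*)) ≥ D_{ℓᵖ}^{ξ_{c*}}(c,c*) ≥ ‖c − c*‖² (2-convexity for 1<p≤2). Then for all (c,s): ⟨(ξ_{c*},ξ_{s*}), (c*−c, s*−s)⟩ ≤ (C‖ω‖/2) D_{R̃}^{ξ*}((c,s),(c*,s*)) + ‖ω‖·‖B(c,s) − B(c*,s*)‖ + (C‖ω‖/2)‖s − s*‖². -/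
open scoped RealInnerProductSpace

/-!
Apply the source condition to the direction `(c* - c, s* - s)`: the pairing becomes
`⟨ω, B′(c*,s*)((c*,s*) - (c,s))⟩`. Since `B` is bilinear, its first-order Taylor expansion at
`(c*, s*)` is exact up to the remainder `B(c - c*, s - s*)`, so the pairing equals
`⟨ω, B(c - c*, s - s*)⟩ - ⟨ω, B(c,s) - B(c*,s*)⟩`. Cauchy–Schwarz, the bound on `B` and
`ab ≤ (a² + b²)/2` control the first term by `(C‖ω‖/2)(‖c - c*‖² + ‖s - s*‖²)`, and
`‖c - c*‖² ≤ D_R̃` finishes the estimate.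
-/

theorem LinearMap.map_sub_map_eq_deriv_add_remainder {R M N P : Type*} [CommRing R]
    [AddCommGroup M] [Module R M] [AddCommGroup N] [Module R N] [AddCommGroup P] [Module R P]
    (f : M →ₗ[R] N →ₗ[R] P) (x x₀ : M) (y y₀ : N) :
    f x y - f x₀ y₀ = f x₀ (y - y₀) + f (x - x₀) y₀ + f (x - x₀) (y - y₀) := by
  simp only [map_sub, LinearMap.sub_apply]
  abel

theorem real_inner_le_of_norm_le_mul_mul {E : Type*} [NormedAddCommGroup E]
    [InnerProductSpace ℝ E] (ω z : E) {C a b : ℝ} (hC : 0 ≤ C) (hz : ‖z‖ ≤ C * a * b) :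
    ⟪ω, z⟫ ≤ C * ‖ω‖ / 2 * (a ^ 2 + b ^ 2) := by
  have hab : 2 * a * b ≤ a ^ 2 + b ^ 2 := two_mul_le_add_sq a b
  calc ⟪ω, z⟫ ≤ ‖ω‖ * ‖z‖ := real_inner_le_norm ω z
    _ ≤ ‖ω‖ * (C * a * b) := mul_le_mul_of_nonneg_left hz (norm_nonneg ω)
    _ = C * ‖ω‖ / 2 * (2 * a * b) := by ring
    _ ≤ C * ‖ω‖ / 2 * (a ^ 2 + b ^ 2) := by gcongr

theorem neg_real_inner_le_norm_mul_norm {E : Type*} [NormedAddCommGroup E]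
    [InnerProductSpace ℝ E] (x y : E) : -⟪x, y⟫ ≤ ‖x‖ * ‖y‖ :=
  (neg_le_abs _).trans (abs_real_inner_le_norm x y)

/-- Source condition estimate: if `(ξ_c*, ξ_s*) = B′(c*,s*)* ω` and the Bregman distance
of `R̃` dominates the `ℓᵖ` Bregman distance which dominates `‖c − c*‖²`, then
`⟨ξ*, (c*−c, s*−s)⟩ ≤ (C‖ω‖/2) D_R̃ + ‖ω‖‖B(c,s) − B(c*,s*)‖ + (C‖ω‖/2)‖s − s*‖²`. -/
theorem stmt_12 {X Y Z : Type*}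
    [NormedAddCommGroup X] [InnerProductSpace ℝ X]
    [NormedAddCommGroup Y] [InnerProductSpace ℝ Y]
    [NormedAddCommGroup Z] [InnerProductSpace ℝ Z]
    (B : X → Y → Z) (C : ℝ) (hC : 0 ≤ C)
    (hadd₁ : ∀ c₁ c₂ s, B (c₁ + c₂) s = B c₁ s + B c₂ s)
    (hsmul₁ : ∀ (a : ℝ) c s, B (a • c) s = a • B c s)
    (hadd₂ : ∀ c s₁ s₂, B c (s₁ + s₂) = B c s₁ + B c s₂)
    (hsmul₂ : ∀ (a : ℝ) c s, B c (a • s) = a • B c s)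
    (hbound : ∀ c s, ‖B c s‖ ≤ C * ‖c‖ * ‖s‖)
    (cstar : X) (sstar : Y) (ω : Z) (ξc : X) (ξs : Y)
    -- source condition (ξ_c*, ξ_s*) = B′(c*,s*)* ω, expressed weakly
    (hsource : ∀ (x : X) (y : Y),
      ⟪ξc, x⟫ + ⟪ξs, y⟫ = ⟪ω, B cstar y + B x sstar⟫)
    (DR : X → Y → ℝ) (Dlp : X → ℝ)
    (hD1 : ∀ c s, Dlp c ≤ DR c s)
    (hD2 : ∀ c, ‖c - cstar‖ ^ 2 ≤ Dlp c) :
    ∀ (c : X) (s : Y),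
      ⟪ξc, cstar - c⟫ + ⟪ξs, sstar - s⟫
        ≤ (C * ‖ω‖ / 2) * DR c s + ‖ω‖ * ‖B c s - B cstar sstar‖
          + (C * ‖ω‖ / 2) * ‖s - sstar‖ ^ 2 := by
  intro c s
  let b : X →ₗ[ℝ] Y →ₗ[ℝ] Z := LinearMap.mk₂ ℝ B hadd₁ hsmul₁ hadd₂ hsmul₂
  have hlinear : B cstar (sstar - s) + B (cstar - c) sstar
      = B (c - cstar) (s - sstar) - (B c s - B cstar sstar) := by
    change b cstar (sstar - s) + b (cstar - c) sstar
      = b (c - cstar) (s - sstar) - (b c s - b cstar sstar)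
    rw [b.map_sub_map_eq_deriv_add_remainder c cstar s sstar, ← neg_sub c, ← neg_sub s]
    simp only [map_neg, LinearMap.neg_apply]
    abel
  have hpairing : ⟪ξc, cstar - c⟫ + ⟪ξs, sstar - s⟫
      = ⟪ω, B (c - cstar) (s - sstar)⟫ - ⟪ω, B c s - B cstar sstar⟫ := by
    rw [hsource, hlinear, inner_sub_right]
  have hremainder := real_inner_le_of_norm_le_mul_mul ω _ hC (hbound (c - cstar) (s - sstar))
  have hresidual := neg_real_inner_le_norm_mul_norm ω (B c s - B cstar sstar)
  have hDR : ‖c - cstar‖ ^ 2 ≤ DR c s := (hD2 c).trans (hD1 c s)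
  have hCω : 0 ≤ C * ‖ω‖ / 2 := by positivity
  rw [hpairing]
  linarith [mul_le_mul_of_nonneg_left hDR hCω]
end
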